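/- For fixed r > 1, lim_{N→∞} (N/2 + 1)^{−2r/N} · B_{(N,r)}^{−2r/N} = r (1 − 1/r)^{1−r}, where B_{(N,r)} = ∫₀¹ t^{(N/(2r))(r−1)} (1−t)^{N/(2r)} dt. -/

import Mathlib

/-!
The integrand of `B_(N,r)` is `f t ^ N` with `f t = t ^ α * (1 - t) ^ β`, `α = (r - 1) / (2r)`,
`β = 1 / (2r)`, so `B_(N,r) ^ (1/N)` is the `L^N`-norm of `f` on `[0, 1]` and tends to `max f`
as `N → ∞`. By weighted AM-GM the maximum is attained at `t = α / (α + β) = 1 - 1/r`, and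
`(max f) ^ (-2r) = r (1 - 1/r) ^ (1 - r)`; the factor `(N/2 + 1) ^ (-2r/N)` tends to `1`.
-/

open Filter Set Topology MeasureTheory

lemma tendsto_rpow_inv_atTop_nhds_one {C : ℝ} (hC : 0 < C) :
    Tendsto (fun p : ℝ => C ^ p⁻¹) atTop (𝓝 1) := by
  simpa using tendsto_const_nhds.rpow tendsto_inv_atTop_zero (Or.inl hC.ne')

lemma tendsto_div_two_add_one_rpow_div (c : ℝ) :
    Tendsto (fun x : ℝ => (x / 2 + 1) ^ (c / x)) atTop (𝓝 1) :=
  ((tendsto_rpow_div_mul_add c 2 (-2) two_ne_zero.symm).comp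
    (tendsto_atTop_add_const_right _ 1 (tendsto_id.atTop_div_const two_pos))).congr fun x => by
      simp only [Function.comp_apply, id]
      ring_nf

lemma mul_rpow_rpow_inv {C m p : ℝ} (hC : 0 ≤ C) (hm : 0 ≤ m) (hp : p ≠ 0) :
    (C * m ^ p) ^ p⁻¹ = C ^ p⁻¹ * m := by
  rw [Real.mul_rpow hC (Real.rpow_nonneg hm p), Real.rpow_rpow_inv hm hp]

section PowerMeans

variable {f : ℝ → ℝ} {a b p : ℝ}

lemma ContinuousOn.intervalIntegrable_rpow (hab : a ≤ b) (hf : ContinuousOn f (Icc a b))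
    (hp : 0 ≤ p) :
    IntervalIntegrable (fun x => f x ^ p) volume a b :=
  (hf.rpow_const fun _ _ => Or.inr hp).intervalIntegrable_of_Icc hab

lemma integral_rpow_le_of_le {M : ℝ} (hab : a ≤ b) (hf : ContinuousOn f (Icc a b))
    (hf0 : ∀ x ∈ Icc a b, 0 ≤ f x) (hfM : ∀ x ∈ Icc a b, f x ≤ M) (hp : 0 ≤ p) :
    ∫ x in a..b, f x ^ p ≤ (b - a) * M ^ p := by
  calc ∫ x in a..b, f x ^ p ≤ ∫ _ in a..b, M ^ p :=
        intervalIntegral.integral_mono_on hab (hf.intervalIntegrable_rpow hab hp)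
          intervalIntegrable_const fun x hx => Real.rpow_le_rpow (hf0 x hx) (hfM x hx) hp
    _ = (b - a) * M ^ p := by simp

lemma le_integral_rpow_of_le {u v c : ℝ} (huv : u ≤ v) (hsub : Icc u v ⊆ Icc a b)
    (hf : ContinuousOn f (Icc a b)) (hf0 : ∀ x ∈ Icc a b, 0 ≤ f x) (hc : 0 ≤ c)
    (hcf : ∀ x ∈ Icc u v, c ≤ f x) (hp : 0 ≤ p) :
    (v - u) * c ^ p ≤ ∫ x in a..b, f x ^ p := by
  have hau : a ≤ u := (hsub (left_mem_Icc.2 huv)).1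
  have hvb : v ≤ b := (hsub (right_mem_Icc.2 huv)).2
  calc (v - u) * c ^ p = ∫ _ in u..v, c ^ p := by simp
    _ ≤ ∫ x in u..v, f x ^ p :=
        intervalIntegral.integral_mono_on huv intervalIntegrable_const
          ((hf.mono hsub).intervalIntegrable_rpow huv hp)
          fun x hx => Real.rpow_le_rpow hc (hcf x hx) hp
    _ ≤ ∫ x in a..b, f x ^ p := by
        refine intervalIntegral.integral_mono_interval hau huv hvb ?_
          (hf.intervalIntegrable_rpow (hau.trans (huv.trans hvb)) hp)
        filter_upwards [ae_restrict_mem measurableSet_Ioc] with x hx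
        exact Real.rpow_nonneg (hf0 x (Ioc_subset_Icc_self hx)) p

lemma ContinuousOn.exists_Icc_subset_lt {x₀ c : ℝ} (hab : a < b) (hf : ContinuousOn f (Icc a b))
    (hx₀ : x₀ ∈ Icc a b) (hc : c < f x₀) :
    ∃ u v, u < v ∧ Icc u v ⊆ Icc a b ∧ ∀ x ∈ Icc u v, c < f x := by
  obtain ⟨ε, hε, hball⟩ := Metric.mem_nhdsWithin_iff.1 (hf x₀ hx₀ (Ioi_mem_nhds hc))
  have hsub : Icc (max a (x₀ - ε / 2)) (min b (x₀ + ε / 2)) ⊆ Icc a b :=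
    Icc_subset_Icc (le_max_left _ _) (min_le_left _ _)
  refine ⟨max a (x₀ - ε / 2), min b (x₀ + ε / 2), ?_, hsub,
    fun x hx => hball ⟨?_, hsub hx⟩⟩
  · simp only [max_lt_iff, lt_min_iff]
    refine ⟨⟨hab, ?_⟩, ?_, ?_⟩ <;> linarith [hx₀.1, hx₀.2]
  · simp only [mem_Icc, max_le_iff, le_min_iff] at hx
    rw [Metric.mem_ball, Real.dist_eq, abs_lt]
    constructor <;> linarith

theorem tendsto_integral_rpow_rpow_inv {M : ℝ} (hab : a < b) (hf : ContinuousOn f (Icc a b))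
    (hf0 : ∀ x ∈ Icc a b, 0 ≤ f x) (hM : IsGreatest (f '' Icc a b) M) :
    Tendsto (fun p : ℝ => (∫ x in a..b, f x ^ p) ^ p⁻¹) atTop (𝓝 M) := by
  obtain ⟨⟨x₀, hx₀, rfl⟩, hx₀max⟩ := hM
  have hfM : ∀ x ∈ Icc a b, f x ≤ f x₀ := fun x hx => hx₀max (mem_image_of_mem f hx)
  have hI0 : ∀ p : ℝ, 0 ≤ ∫ x in a..b, f x ^ p := fun p =>
    intervalIntegral.integral_nonneg hab.le fun x hx => Real.rpow_nonneg (hf0 x hx) p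
  refine tendsto_order.2 ⟨fun c hc => ?_, fun c hc => ?_⟩
  · obtain hc0 | hc0 := lt_or_ge c 0
    · exact Eventually.of_forall fun p => hc0.trans_le (Real.rpow_nonneg (hI0 p) _)
    obtain ⟨d, hcd, hdM⟩ := exists_between hc
    obtain ⟨u, v, huv, hsub, hdf⟩ := hf.exists_Icc_subset_lt hab hx₀ hdM
    have hlim := ((tendsto_rpow_inv_atTop_nhds_one (sub_pos.2 huv)).mul_const d).eventually
      (lt_mem_nhds (a := c) (by simpa using hcd))
    filter_upwards [hlim, eventually_gt_atTop 0] with p hlt hp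
    calc c < (v - u) ^ p⁻¹ * d := hlt
      _ = ((v - u) * d ^ p) ^ p⁻¹ :=
          (mul_rpow_rpow_inv (sub_pos.2 huv).le (hc0.trans hcd.le) hp.ne').symm
      _ ≤ (∫ x in a..b, f x ^ p) ^ p⁻¹ := Real.rpow_le_rpow
          (mul_nonneg (sub_pos.2 huv).le (Real.rpow_nonneg (hc0.trans hcd.le) p))
          (le_integral_rpow_of_le huv.le hsub hf hf0 (hc0.trans hcd.le)
            (fun x hx => (hdf x hx).le) hp.le) (inv_nonneg.2 hp.le)
  · have hlim := ((tendsto_rpow_inv_atTop_nhds_one (sub_pos.2 hab)).mul_const (f x₀)).eventually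
      (gt_mem_nhds (a := c) (by simpa using hc))
    filter_upwards [hlim, eventually_gt_atTop 0] with p hlt hp
    calc (∫ x in a..b, f x ^ p) ^ p⁻¹ ≤ ((b - a) * f x₀ ^ p) ^ p⁻¹ :=
          Real.rpow_le_rpow (hI0 p) (integral_rpow_le_of_le hab.le hf hf0 hfM hp.le)
            (inv_nonneg.2 hp.le)
      _ = (b - a) ^ p⁻¹ * f x₀ := mul_rpow_rpow_inv (sub_pos.2 hab).le (hf0 x₀ hx₀) hp.ne'
      _ < c := hlt

end PowerMeans

section BetaIntegrand

variable {α β : ℝ}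

lemma rpow_mul_one_sub_rpow_le (hα : 0 < α) (hβ : 0 < β) {t : ℝ} (ht : t ∈ Icc 0 1) :
    t ^ α * (1 - t) ^ β ≤ (α / (α + β)) ^ α * (β / (α + β)) ^ β := by
  have hs : 0 < α + β := add_pos hα hβ
  set w₁ := α / (α + β) with hw₁_def
  set w₂ := β / (α + β) with hw₂_def
  have hw₁ : 0 < w₁ := div_pos hα hs
  have hw₂ : 0 < w₂ := div_pos hβ hs
  have ht₀ : 0 ≤ t := ht.1
  have ht₁ : 0 ≤ 1 - t := sub_nonneg.2 ht.2
  have hamgm : (t / w₁) ^ w₁ * ((1 - t) / w₂) ^ w₂ ≤ 1 := by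
    have := Real.geom_mean_le_arith_mean2_weighted hw₁.le hw₂.le (div_nonneg ht₀ hw₁.le)
      (div_nonneg ht₁ hw₂.le) (by rw [hw₁_def, hw₂_def, ← add_div, div_self hs.ne'])
    rwa [mul_div_cancel₀ _ hw₁.ne', mul_div_cancel₀ _ hw₂.ne', add_sub_cancel] at this
  have hpow : (t / w₁) ^ α * ((1 - t) / w₂) ^ β ≤ 1 := by
    calc _ = ((t / w₁) ^ w₁ * ((1 - t) / w₂) ^ w₂) ^ (α + β) := by
          rw [Real.mul_rpow (by positivity) (by positivity), ← Real.rpow_mul (by positivity),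
            ← Real.rpow_mul (by positivity), hw₁_def, hw₂_def, div_mul_cancel₀ _ hs.ne',
            div_mul_cancel₀ _ hs.ne']
      _ ≤ 1 := Real.rpow_le_one (by positivity) hamgm hs.le
  rwa [Real.div_rpow ht₀ hw₁.le, Real.div_rpow ht₁ hw₂.le, div_mul_div_comm,
    div_le_one (by positivity)] at hpow

lemma isGreatest_rpow_mul_one_sub_rpow (hα : 0 < α) (hβ : 0 < β) :
    IsGreatest ((fun t => t ^ α * (1 - t) ^ β) '' Icc 0 1)
      ((α / (α + β)) ^ α * (β / (α + β)) ^ β) := by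
  have hs : 0 < α + β := add_pos hα hβ
  refine ⟨⟨α / (α + β), ⟨by positivity, (div_le_one hs).2 (by linarith)⟩, ?_⟩, ?_⟩
  · simp only
    congr 2
    field_simp
    ring
  · rintro _ ⟨t, ht, rfl⟩
    exact rpow_mul_one_sub_rpow_le hα hβ ht

theorem tendsto_integral_rpow_mul_one_sub_rpow_rpow_inv (hα : 0 < α) (hβ : 0 < β) :
    Tendsto (fun N : ℝ => (∫ t in (0 : ℝ)..1, t ^ (α * N) * (1 - t) ^ (β * N)) ^ N⁻¹)
      atTop (𝓝 ((α / (α + β)) ^ α * (β / (α + β)) ^ β)) := by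
  have hcont : ContinuousOn (fun t : ℝ => t ^ α * (1 - t) ^ β) (Icc 0 1) :=
    ((continuous_id.rpow_const fun _ => Or.inr hα.le).mul
      ((continuous_const.sub continuous_id).rpow_const fun _ => Or.inr hβ.le)).continuousOn
  refine (tendsto_integral_rpow_rpow_inv zero_lt_one hcont
    (fun t ht => mul_nonneg (Real.rpow_nonneg ht.1 _) (Real.rpow_nonneg (sub_nonneg.2 ht.2) _))
    (isGreatest_rpow_mul_one_sub_rpow hα hβ)).congr fun N => ?_
  congr 1
  refine intervalIntegral.integral_congr fun t ht => ?_
  rw [uIcc_of_le zero_le_one] at ht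
  rw [Real.mul_rpow (Real.rpow_nonneg ht.1 _) (Real.rpow_nonneg (sub_nonneg.2 ht.2) _),
    ← Real.rpow_mul ht.1, ← Real.rpow_mul (sub_nonneg.2 ht.2)]

end BetaIntegrand

theorem expansion_opta_limit (r : ℝ) (hr : 1 < r) :
    Tendsto (fun N : ℝ =>
        (N / 2 + 1) ^ (-(2 * r) / N) *
        (∫ t in (0:ℝ)..1, t ^ (N / (2 * r) * (r - 1)) * (1 - t) ^ (N / (2 * r)))
          ^ (-(2 * r) / N))
      atTop (nhds (r * (1 - 1 / r) ^ (1 - r))) := by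
  have hr₀ : 0 < r := zero_lt_one.trans hr
  have hα : 0 < (r - 1) / (2 * r) := div_pos (sub_pos.2 hr) (by positivity)
  have hβ : 0 < 1 / (2 * r) := by positivity
  have h1r : 0 < 1 - 1 / r := sub_pos.2 ((div_lt_one hr₀).2 hr)
  have hroot := tendsto_integral_rpow_mul_one_sub_rpow_rpow_inv hα hβ
  have hsum : (r - 1) / (2 * r) + 1 / (2 * r) = 1 / 2 := by field_simp; ring
  rw [hsum, show (r - 1) / (2 * r) / (1 / 2) = 1 - 1 / r by field_simp,
    show 1 / (2 * r) / (1 / 2) = 1 / r by field_simp] at hroot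
  have hmax : ((1 - 1 / r) ^ ((r - 1) / (2 * r)) * (1 / r) ^ (1 / (2 * r))) ^ (-(2 * r)) =
      r * (1 - 1 / r) ^ (1 - r) := by
    rw [Real.mul_rpow (Real.rpow_nonneg h1r.le _) (by positivity), ← Real.rpow_mul h1r.le,
      ← Real.rpow_mul (by positivity),
      show (r - 1) / (2 * r) * -(2 * r) = 1 - r by field_simp; ring,
      show 1 / (2 * r) * -(2 * r) = -1 by field_simp, Real.rpow_neg_one, one_div, inv_inv,
      mul_comm]
  have hlim := (tendsto_div_two_add_one_rpow_div (-(2 * r))).mul (hroot.rpow_const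
    (p := -(2 * r)) (Or.inl (mul_pos (Real.rpow_pos_of_pos h1r _) (by positivity)).ne'))
  rw [one_mul, hmax] at hlim
  refine hlim.congr fun N => ?_
  rw [← Real.rpow_mul (intervalIntegral.integral_nonneg zero_le_one fun t ht =>
    mul_nonneg (Real.rpow_nonneg ht.1 _) (Real.rpow_nonneg (sub_nonneg.2 ht.2) _))]
  ring_nf
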